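/- If Σ is the all-negative signed complete graph K_n^- (n ≥ 2), then every k-positive function for Σ is injective; hence bdim(Σ) = sbdim(Σ). Moreover, any k-positive function yields an n-element NIP set in Ω^k, so by the bound that an NIP set in ℝ^k has at most k+1 elements, bdim(K_n^-) ≥ n − 1. -/

import Mathlib

open Finset

/-- The sign of a real number, as an integer. -/
noncomputable def sgnZ (x : ℝ) : ℤ := if 0 < x then 1 else if x < 0 then -1 else 0

/-- The standard inner product on `ℝ^k`. -/
def dotp {k : ℕ} (a b : Fin k → ℝ) : ℝ := ∑ i, a i * b i

/-- Membership in `Ω^k` where `Ω = {-1,0,1}`. -/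
def InOmega {k : ℕ} (a : Fin k → ℝ) : Prop := ∀ i, a i = -1 ∨ a i = 0 ∨ a i = 1

/-- `σ` is a sign function for the graph `G`: symmetric and `±1`-valued on edges,
so that `(G, σ)` is a signed graph. -/
def IsSignFn {V : Type*} (G : SimpleGraph V) (σ : V → V → ℤ) : Prop :=
  (∀ u v, σ u v = σ v u) ∧ ∀ u v, G.Adj u v → σ u v = 1 ∨ σ u v = -1

/-- `ζ : V → Ω^k` is a vector valued (`k`-)switching function for the signed graph:
`⟨ζ u, ζ v⟩ ≠ 0` for every edge `uv`. -/
def IsSwitching {V : Type*} (G : SimpleGraph V) {k : ℕ} (ζ : V → Fin k → ℝ) : Prop :=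
  (∀ v, InOmega (ζ v)) ∧ ∀ u v, G.Adj u v → dotp (ζ u) (ζ v) ≠ 0

/-- The sign function of the switched signed graph `Σ^ζ`:
`σ^ζ(uv) = σ(uv) · sgn ⟨ζ u, ζ v⟩`. -/
noncomputable def switchSign {V : Type*} (σ : V → V → ℤ) {k : ℕ} (ζ : V → Fin k → ℝ) : V → V → ℤ :=
  fun u v => σ u v * sgnZ (dotp (ζ u) (ζ v))

/-- `ζ : V → Ω^k` is a positive `k`-switching function (a `k`-positive function):
it switches `Σ` to the all positive signed graph. -/
def IsPositive {V : Type*} (G : SimpleGraph V) (σ : V → V → ℤ) {k : ℕ}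
    (ζ : V → Fin k → ℝ) : Prop :=
  (∀ v, InOmega (ζ v)) ∧ ∀ u v, G.Adj u v → switchSign σ ζ u v = 1

/-- The balancing dimension: the least `k ≥ 1` admitting a `k`-positive function. -/
noncomputable def bdim {V : Type*} (G : SimpleGraph V) (σ : V → V → ℤ) : ℕ :=
  sInf {k | 1 ≤ k ∧ ∃ ζ : V → Fin k → ℝ, IsPositive G σ ζ}

/-- The strong balancing dimension: the least `k ≥ 1` admitting an injective
`k`-positive function. -/
noncomputable def sbdim {V : Type*} (G : SimpleGraph V) (σ : V → V → ℤ) : ℕ :=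
  sInf {k | 1 ≤ k ∧ ∃ ζ : V → Fin k → ℝ, Function.Injective ζ ∧ IsPositive G σ ζ}

/-!
For the all-negative complete graph a `k`-positive function is the same as a family in `Ω^k`
with pairwise negative inner products, and such a family is injective since `⟨a, a⟩ ≥ 0`.
Removing one member `w i₀` from a family with pairwise negative inner products leaves a linearly
independent family: if a combination vanishes, its positive and negative parts `u = z` satisfy
`⟨u, u⟩ = ⟨u, z⟩ ≤ 0`, so `u = z = 0`, and pairing with `w i₀` forces every coefficient to
vanish. Hence `n ≤ k + 1`. The signed incidence vectors of the complete directed graph show that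
some `k`-positive function exists, so `bdim` is attained.
-/

section NegativeInnerProduct

open scoped RealInnerProductSpace

variable {E : Type*} [NormedAddCommGroup E] [InnerProductSpace ℝ E] {ι : Type*} [Fintype ι]
  {w : ι → E}

theorem inner_sum_smul_sum_smul_nonpos (hw : Pairwise fun i j => ⟪w i, w j⟫ < 0)
    {c d : ι → ℝ} (hc : 0 ≤ c) (hd : 0 ≤ d) (hcd : ∀ i, c i * d i = 0) :
    ⟪∑ i, c i • w i, ∑ j, d j • w j⟫ ≤ 0 := by
  simp_rw [sum_inner, inner_sum, real_inner_smul_left, real_inner_smul_right]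
  refine sum_nonpos fun i _ => sum_nonpos fun j _ => ?_
  rcases eq_or_ne i j with rfl | hij
  · exact le_of_eq (by linear_combination ⟪w i, w i⟫ * hcd i)
  · have := hw hij
    have := mul_nonneg (hc i) (hd j)
    nlinarith

theorem eq_zero_of_sum_smul_eq_zero_of_inner_neg {v : E} (hv : ∀ i, ⟪w i, v⟫ < 0)
    {c : ι → ℝ} (hc : 0 ≤ c) (hsum : ∑ i, c i • w i = 0) : c = 0 := by
  have hterms : ∀ i, c i * ⟪w i, v⟫ ≤ 0 := fun i =>
    mul_nonpos_of_nonneg_of_nonpos (hc i) (hv i).le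
  have hzero : ∑ i, c i * ⟪w i, v⟫ = 0 := by
    simpa [sum_inner, real_inner_smul_left] using congrArg (⟪·, v⟫) hsum
  funext i
  have := (Fintype.sum_eq_zero_iff_of_nonpos hterms).1 hzero
  exact (mul_eq_zero.1 (congrFun this i)).resolve_right (hv i).ne

theorem linearIndependent_of_pairwise_inner_neg (hw : Pairwise fun i j => ⟪w i, w j⟫ < 0)
    {v : E} (hv : ∀ i, ⟪w i, v⟫ < 0) : LinearIndependent ℝ w := by
  rw [Fintype.linearIndependent_iff]
  intro g hg
  set u := ∑ i, (g i)⁺ • w i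
  set z := ∑ i, (g i)⁻ • w i
  have huz : u = z := by
    rw [← sub_eq_zero, ← hg, ← sum_sub_distrib]
    simp_rw [← sub_smul, posPart_sub_negPart]
  have hu : u = 0 := by
    refine inner_self_eq_zero.1 (le_antisymm ?_ real_inner_self_nonneg)
    conv_lhs => arg 3; rw [huz]
    refine inner_sum_smul_sum_smul_nonpos hw (fun i => posPart_nonneg _)
      (fun i => negPart_nonneg _) fun i => ?_
    rcases le_total (g i) 0 with h | h
    · simp [posPart_eq_zero.2 h]
    · simp [negPart_eq_zero.2 h]
  have hpos := eq_zero_of_sum_smul_eq_zero_of_inner_neg hv (fun i => posPart_nonneg _) hu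
  have hneg := eq_zero_of_sum_smul_eq_zero_of_inner_neg hv (fun i => negPart_nonneg _)
    (huz ▸ hu)
  intro i
  rw [← posPart_sub_negPart (g i), congrFun hpos i, congrFun hneg i, Pi.zero_apply, sub_zero]

theorem card_le_finrank_add_one_of_pairwise_inner_neg [FiniteDimensional ℝ E]
    (hw : Pairwise fun i j => ⟪w i, w j⟫ < 0) : Fintype.card ι ≤ Module.finrank ℝ E + 1 := by
  classical
  rcases isEmpty_or_nonempty ι with _ | ⟨⟨i₀⟩⟩
  · simp
  have hli : LinearIndependent ℝ fun i : {i // i ≠ i₀} => w i :=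
    linearIndependent_of_pairwise_inner_neg (fun i j hij => hw (Subtype.coe_ne_coe.2 hij))
      fun i => hw i.2
  have := hli.fintype_card_le_finrank
  rw [Fintype.card_subtype_compl, Fintype.card_subtype_eq] at this
  omega

end NegativeInnerProduct

theorem sgnZ_eq_neg_one_iff {x : ℝ} : sgnZ x = -1 ↔ x < 0 := by
  unfold sgnZ
  split_ifs <;> grind

theorem dotp_self_nonneg {k : ℕ} (a : Fin k → ℝ) : 0 ≤ dotp a a :=
  sum_nonneg fun i _ => mul_self_nonneg (a i)

theorem dotp_eq_inner {k : ℕ} (a b : Fin k → ℝ) :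
    dotp a b = inner ℝ (WithLp.toLp 2 a : EuclideanSpace ℝ (Fin k)) (WithLp.toLp 2 b) := by
  simp [dotp, PiLp.inner_apply, mul_comm]

section AllNegativeComplete

variable {V : Type*} {k : ℕ} {ζ : V → Fin k → ℝ}

theorem isPositive_top_neg_one_iff :
    IsPositive (⊤ : SimpleGraph V) (fun _ _ => (-1 : ℤ)) ζ ↔
      (∀ v, InOmega (ζ v)) ∧ Pairwise fun u v => dotp (ζ u) (ζ v) < 0 := by
  simp [IsPositive, switchSign, neg_eq_iff_eq_neg, sgnZ_eq_neg_one_iff, Pairwise]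

theorem IsPositive.pairwise_dotp_neg
    (h : IsPositive (⊤ : SimpleGraph V) (fun _ _ => (-1 : ℤ)) ζ) :
    Pairwise fun u v => dotp (ζ u) (ζ v) < 0 :=
  (isPositive_top_neg_one_iff.1 h).2

theorem IsPositive.injective_of_top_neg_one
    (h : IsPositive (⊤ : SimpleGraph V) (fun _ _ => (-1 : ℤ)) ζ) : Function.Injective ζ := by
  intro u v huv
  by_contra hne
  have : dotp (ζ u) (ζ v) < 0 := h.pairwise_dotp_neg hne
  rw [huv] at this
  exact (dotp_self_nonneg _).not_gt this

theorem bdim_top_neg_one_eq_sbdim :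
    bdim (⊤ : SimpleGraph V) (fun _ _ => (-1 : ℤ)) =
      sbdim (⊤ : SimpleGraph V) (fun _ _ => (-1 : ℤ)) := by
  unfold bdim sbdim
  congr 1
  ext k
  constructor
  · rintro ⟨hk, ζ, hζ⟩
    exact ⟨hk, ζ, hζ.injective_of_top_neg_one, hζ⟩
  · rintro ⟨hk, ζ, -, hζ⟩
    exact ⟨hk, ζ, hζ⟩

/-- Two distinct vertices `u, v` share exactly the arcs `(u, v)` and `(v, u)`, with opposite signs
on each, so their signed incidence vectors have inner product `-2`. -/
def signedIncidence [DecidableEq V] (v : V) (p : V × V) : ℝ :=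
  (if v = p.1 then 1 else 0) - (if v = p.2 then 1 else 0)

theorem sum_signedIncidence_mul [Fintype V] [DecidableEq V] {u v : V} (huv : u ≠ v) :
    ∑ p : V × V, signedIncidence u p * signedIncidence v p = -2 := by
  simp only [signedIncidence, Fintype.sum_prod_type, mul_sub, mul_ite, mul_one, mul_zero]
  simp [Finset.sum_sub_distrib, huv]
  norm_num

theorem exists_isPositive_top_neg_one [Fintype V] :
    ∃ ζ : V → Fin (Fintype.card (V × V)) → ℝ,
      IsPositive (⊤ : SimpleGraph V) (fun _ _ => (-1 : ℤ)) ζ := by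
  classical
  let e := (Fintype.equivFin (V × V)).symm
  refine ⟨fun v i => signedIncidence v (e i), isPositive_top_neg_one_iff.2 ⟨?_, ?_⟩⟩
  · intro v i
    dsimp only [signedIncidence]
    split_ifs <;> norm_num
  · intro u v huv
    rw [dotp, Equiv.sum_comp e fun p => signedIncidence u p * signedIncidence v p,
      sum_signedIncidence_mul huv]
    norm_num

theorem card_sub_one_le_bdim_top_neg_one [Fintype V] :
    Fintype.card V - 1 ≤ bdim (⊤ : SimpleGraph V) (fun _ _ => (-1 : ℤ)) := by
  rcases isEmpty_or_nonempty V with _ | _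
  · simp
  have hne : {k | 1 ≤ k ∧ ∃ ζ : V → Fin k → ℝ,
      IsPositive (⊤ : SimpleGraph V) (fun _ _ => (-1 : ℤ)) ζ}.Nonempty :=
    ⟨_, Fintype.card_pos, exists_isPositive_top_neg_one⟩
  obtain ⟨-, ζ, hζ⟩ := Nat.sInf_mem hne
  have := card_le_finrank_add_one_of_pairwise_inner_neg
    (w := fun v => (WithLp.toLp 2 (ζ v) : EuclideanSpace ℝ (Fin _))) fun u v huv => by
      simpa only [← dotp_eq_inner] using hζ.pairwise_dotp_neg huv
  rw [finrank_euclideanSpace_fin] at this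
  exact Nat.sub_le_of_le_add this

end AllNegativeComplete

theorem all_negative_complete_general {V : Type*} [Fintype V]
    (n : ℕ) (hcard : Fintype.card V = n) :
    (∀ (k : ℕ) (ζ : V → Fin k → ℝ),
      IsPositive (⊤ : SimpleGraph V) (fun _ _ => (-1 : ℤ)) ζ →
        Function.Injective ζ ∧ ∀ u v : V, u ≠ v → dotp (ζ u) (ζ v) < 0) ∧
    bdim (⊤ : SimpleGraph V) (fun _ _ => (-1 : ℤ)) =
      sbdim (⊤ : SimpleGraph V) (fun _ _ => (-1 : ℤ)) ∧
    n - 1 ≤ bdim (⊤ : SimpleGraph V) (fun _ _ => (-1 : ℤ)) :=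
  ⟨fun _ _ h => ⟨h.injective_of_top_neg_one, fun _ _ huv => h.pairwise_dotp_neg huv⟩,
    bdim_top_neg_one_eq_sbdim, hcard ▸ card_sub_one_le_bdim_top_neg_one⟩

/-- For the all-negative complete graph `Kₙ⁻` (`n ≥ 2`): every `k`-positive function is
injective and its values form an `n`-element NIP set (pairwise negative inner products);
hence `bdim = sbdim`, and since an NIP set in `ℝ^k` has at most `k+1` elements,
`bdim(Kₙ⁻) ≥ n − 1`. -/
theorem all_negative_complete {V : Type*} [Fintype V] [DecidableEq V]
    (n : ℕ) (hn : 2 ≤ n) (hcard : Fintype.card V = n) :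
    (∀ (k : ℕ) (ζ : V → Fin k → ℝ),
      IsPositive (⊤ : SimpleGraph V) (fun _ _ => (-1 : ℤ)) ζ →
        Function.Injective ζ ∧ ∀ u v : V, u ≠ v → dotp (ζ u) (ζ v) < 0) ∧
    bdim (⊤ : SimpleGraph V) (fun _ _ => (-1 : ℤ)) =
      sbdim (⊤ : SimpleGraph V) (fun _ _ => (-1 : ℤ)) ∧
    n - 1 ≤ bdim (⊤ : SimpleGraph V) (fun _ _ => (-1 : ℤ)) :=
  all_negative_complete_general n hcard
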